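/- (Compressible recovery) Let q ∈ (1,∞), x ∈ R^N nonzero, σ = ‖x_{Sᶜ}‖₁ where S holds the k largest absolute entries of x, and C = (4k^{1−1/q} + s_q(x)^{1−1/q})^{q/(q−1)}. Suppose ρ = ρ_{q,C}(A) > 0, y = Ax + ε with ‖ε‖₂ ≤ η, and x̂ minimizes ‖z‖₁/‖z‖_q over {z : ‖y − Az‖₂ ≤ η}. Then ‖x̂ − x‖_q ≤ 2η/ρ + k^{1/q−1}σ and ‖x̂ − x‖₁ ≤ (4k^{1−1/q} + 2 s_q(x)^{1−1/q})η/ρ + (4 + (s_q(x)/k)^{1−1/q})σ. -/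
import Mathlib


open Finset

/-- The `ℓ_q` quasi-norm `(∑ |z i|^q)^(1/q)` on `Fin N → ℝ`. -/
noncomputable def lqNorm {N : ℕ} (q : ℝ) (z : Fin N → ℝ) : ℝ :=
  (∑ i, |z i| ^ q) ^ (1 / q)

/-- The `ℓ_1` norm. -/
noncomputable def l1Norm {N : ℕ} (z : Fin N → ℝ) : ℝ := ∑ i, |z i|

/-- The `ℓ_2` norm. -/
noncomputable def l2Norm {N : ℕ} (z : Fin N → ℝ) : ℝ := Real.sqrt (∑ i, (z i) ^ 2)

/-- The `q`-ratio sparsity `s_q(z) = (‖z‖₁/‖z‖_q)^(q/(q-1))`. -/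
noncomputable def qSparsity {N : ℕ} (q : ℝ) (z : Fin N → ℝ) : ℝ :=
  (l1Norm z / lqNorm q z) ^ (q / (q - 1))

/-- Number of nonzero entries. -/
noncomputable def l0Norm {N : ℕ} (z : Fin N → ℝ) : ℕ :=
  (Finset.univ.filter fun i => z i ≠ 0).card

/-- Restriction of `z` to an index set `S` (zero outside `S`). -/
noncomputable def restr {N : ℕ} (z : Fin N → ℝ) (S : Finset (Fin N)) : Fin N → ℝ :=
  fun i => if i ∈ S then z i else 0
lemma l1Norm_nonneg {N : ℕ} (z : Fin N → ℝ) : 0 ≤ l1Norm z :=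
  Finset.sum_nonneg fun _ _ => abs_nonneg _

lemma lqNorm_nonneg {N : ℕ} (q : ℝ) (z : Fin N → ℝ) : 0 ≤ lqNorm q z :=
  Real.rpow_nonneg (Finset.sum_nonneg fun _ _ => Real.rpow_nonneg (abs_nonneg _) _) _

lemma lqNorm_pos {N : ℕ} (q : ℝ) {z : Fin N → ℝ} (hz : z ≠ 0) :
    0 < lqNorm q z := by
  obtain ⟨i, hi⟩ := Function.ne_iff.mp hz
  exact Real.rpow_pos_of_pos (Finset.sum_pos' (fun j _ => Real.rpow_nonneg (abs_nonneg _) _)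
    ⟨i, Finset.mem_univ i, Real.rpow_pos_of_pos (abs_pos.mpr hi) _⟩) _

lemma l2Norm_eq {m : ℕ} (z : Fin m → ℝ) :
    l2Norm z = ‖(WithLp.equiv 2 (Fin m → ℝ)).symm z‖ := by
  rw [EuclideanSpace.norm_eq]
  simp [l2Norm, sq_abs]

lemma l2Norm_nonneg {m : ℕ} (z : Fin m → ℝ) : 0 ≤ l2Norm z := Real.sqrt_nonneg _

lemma l2Norm_sub_le {m : ℕ} (a b : Fin m → ℝ) : l2Norm (a - b) ≤ l2Norm a + l2Norm b := by
  simp only [l2Norm_eq, map_sub]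
  exact norm_sub_le _ _

lemma l1Norm_split {N : ℕ} (z : Fin N → ℝ) (S : Finset (Fin N)) :
    l1Norm z = l1Norm (restr z S) + l1Norm (restr z Sᶜ) := by
  unfold l1Norm restr
  rw [← Finset.sum_add_distrib]
  refine Finset.sum_congr rfl fun i _ => ?_
  by_cases hi : i ∈ S <;> simp [hi]

lemma l1_lower {N : ℕ} (u v : Fin N → ℝ) : l1Norm u - l1Norm v ≤ l1Norm (u + v) := by
  rw [sub_le_iff_le_add]
  unfold l1Norm
  rw [← Finset.sum_add_distrib]
  refine Finset.sum_le_sum fun i _ => ?_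
  have := abs_add_le (u i + v i) (-(v i))
  simpa using this

lemma lqNorm_add_le {N : ℕ} {q : ℝ} (hq : 1 ≤ q) (a b : Fin N → ℝ) :
    lqNorm q (a + b) ≤ lqNorm q a + lqNorm q b := by
  simpa [lqNorm] using Real.Lp_add_le Finset.univ a b hq

lemma restr_add {N : ℕ} (a b : Fin N → ℝ) (S : Finset (Fin N)) :
    restr (a + b) S = restr a S + restr b S := by
  funext i
  by_cases hi : i ∈ S <;> simp [restr, hi]

set_option maxHeartbeats 1600000 in
theorem compressible_recovery {m N : ℕ} (A : Matrix (Fin m) (Fin N) ℝ)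
    (q : ℝ) (hq : 1 < q) (k : ℕ) (hk : 0 < k)
    (x : Fin N → ℝ) (hx : x ≠ 0)
    (S : Finset (Fin N)) (hScard : S.card = k)
    (hSlargest : ∀ i ∈ S, ∀ j ∉ S, |x j| ≤ |x i|)
    (σ : ℝ) (hσ : σ = l1Norm (restr x Sᶜ))
    (C : ℝ)
    (hC : C = (4 * (k : ℝ) ^ (1 - 1 / q) + (qSparsity q x) ^ (1 - 1 / q)) ^ (q / (q - 1)))
    (ε : Fin m → ℝ) (η : ℝ) (hη : l2Norm ε ≤ η)
    (y : Fin m → ℝ) (hy : y = A.mulVec x + ε)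
    (ρ : ℝ) (hρpos : 0 < ρ)
    (hρ : ∀ z : Fin N → ℝ, z ≠ 0 → qSparsity q z ≤ C →
      ρ ≤ l2Norm (A.mulVec z) / lqNorm q z)
    (xh : Fin N → ℝ) (hxh : xh ≠ 0) (hfeas : l2Norm (y - A.mulVec xh) ≤ η)
    (hmin : ∀ z : Fin N → ℝ, z ≠ 0 → l2Norm (y - A.mulVec z) ≤ η →
      l1Norm xh / lqNorm q xh ≤ l1Norm z / lqNorm q z) :
    lqNorm q (xh - x) ≤ 2 * η / ρ + (k : ℝ) ^ (1 / q - 1) * σ ∧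
    l1Norm (xh - x) ≤ (4 * (k : ℝ) ^ (1 - 1 / q) + 2 * (qSparsity q x) ^ (1 - 1 / q)) * η / ρ +
      (4 + (qSparsity q x / (k : ℝ)) ^ (1 - 1 / q)) * σ := by
  have hq0 : (0:ℝ) < q := lt_trans one_pos hq
  have hq1 : (0:ℝ) < q - 1 := by linarith
  have hk0 : (0:ℝ) < (k:ℝ) := by exact_mod_cast hk
  have ha0 : (0:ℝ) < 1 - 1/q := by
    have : 1/q < 1 := by rw [div_lt_one hq0]; exact hq
    linarith
  set a : ℝ := 1 - 1/q with ha
  set h : Fin N → ℝ := xh - x with hh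
  have hxh_eq : xh = x + h := by funext i; simp [hh]
  have hη0 : 0 ≤ η := le_trans (l2Norm_nonneg ε) hη
  have hσ0 : 0 ≤ σ := hσ ▸ l1Norm_nonneg _
  set β : ℝ := l1Norm x / lqNorm q x with hβ
  have hxq : 0 < lqNorm q x := lqNorm_pos q hx
  have hβ0 : 0 ≤ β := div_nonneg (l1Norm_nonneg x) hxq.le
  have hs0 : 0 ≤ qSparsity q x := Real.rpow_nonneg hβ0 _
  have hβeq : qSparsity q x ^ a = β := by
    rw [qSparsity, ← hβ, ← Real.rpow_mul hβ0,
      show q / (q-1) * a = 1 by rw [ha]; field_simp, Real.rpow_one]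
  -- feasibility of x and minimality
  have hxfeas : l2Norm (y - A.mulVec x) ≤ η := by
    rw [hy, add_sub_cancel_left]; exact hη
  have hminx : l1Norm xh / lqNorm q xh ≤ β := hmin x hx hxfeas
  have hxhq : 0 < lqNorm q xh := lqNorm_pos q hxh
  have hxh1 : l1Norm xh ≤ β * lqNorm q xh := by
    rw [div_le_iff₀ hxhq] at hminx; linarith
  -- Minkowski
  have hmink : lqNorm q xh ≤ lqNorm q x + lqNorm q h := by
    rw [hxh_eq]; exact lqNorm_add_le hq.le x h
  -- key cone inequality
  have hβx : β * lqNorm q x = l1Norm x := div_mul_cancel₀ _ (ne_of_gt hxq)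
  have hxsplit : l1Norm x = l1Norm (restr x S) + σ := by rw [hσ]; exact l1Norm_split x S
  have hlow1 : l1Norm (restr x S) - l1Norm (restr h S) ≤ l1Norm (restr xh S) := by
    have := l1_lower (restr x S) (restr h S)
    rwa [← restr_add, ← hxh_eq] at this
  have hlow2 : l1Norm (restr h Sᶜ) - l1Norm (restr x Sᶜ) ≤ l1Norm (restr xh Sᶜ) := by
    have := l1_lower (restr h Sᶜ) (restr x Sᶜ)
    rwa [← restr_add, add_comm h x, ← hxh_eq] at this
  have key1 : l1Norm (restr h Sᶜ) ≤ l1Norm (restr h S) + 2*σ + β * lqNorm q h := by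
    have h1 : l1Norm xh = l1Norm (restr xh S) + l1Norm (restr xh Sᶜ) := l1Norm_split xh S
    have h2 : l1Norm xh ≤ l1Norm x + β * lqNorm q h := by
      calc l1Norm xh ≤ β * lqNorm q xh := hxh1
        _ ≤ β * (lqNorm q x + lqNorm q h) := by
            exact mul_le_mul_of_nonneg_left hmink hβ0
        _ = l1Norm x + β * lqNorm q h := by rw [mul_add, hβx]
    have hσ' : l1Norm (restr x Sᶜ) = σ := hσ.symm
    nlinarith [hlow1, hlow2, h1, h2, hxsplit]
  -- Hölder on S
  have hS_sum : l1Norm (restr h S) = ∑ i ∈ S, |h i| := by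
    unfold l1Norm restr
    rw [← Finset.sum_filter_add_sum_filter_not Finset.univ (· ∈ S)]
    have e1 : ∀ i ∈ Finset.univ.filter (· ∈ S), |if i ∈ S then h i else 0| = |h i| := by
      intro i hi; simp at hi; simp [hi]
    have e2 : ∀ i ∈ Finset.univ.filter (¬ · ∈ S), |if i ∈ S then h i else 0| = 0 := by
      intro i hi; simp at hi; simp [hi]
    rw [Finset.sum_congr rfl e1, Finset.sum_congr rfl e2, Finset.sum_const_zero, add_zero]
    congr 1
    ext i; simp
  have holder : l1Norm (restr h S) ≤ (k:ℝ) ^ a * lqNorm q h := by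
    rw [hS_sum]
    have H := Real.inner_le_weight_mul_Lp_of_nonneg S hq.le (fun _ => (1:ℝ))
      (fun i => |h i|) (fun _ => zero_le_one) (fun i => abs_nonneg _)
    simp only [one_mul, Finset.sum_const, nsmul_eq_mul, mul_one, hScard] at H
    have hsub : (∑ i ∈ S, |h i| ^ q) ^ q⁻¹ ≤ lqNorm q h := by
      rw [lqNorm, one_div]
      apply Real.rpow_le_rpow (Finset.sum_nonneg fun i _ => Real.rpow_nonneg (abs_nonneg _) _)
        (Finset.sum_le_sum_of_subset_of_nonneg (Finset.subset_univ S)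
          (fun i _ _ => Real.rpow_nonneg (abs_nonneg _) _)) (by positivity)
    calc ∑ i ∈ S, |h i| ≤ (k:ℝ) ^ (1 - q⁻¹) * (∑ i ∈ S, |h i| ^ q) ^ q⁻¹ := H
      _ ≤ (k:ℝ) ^ a * lqNorm q h := by
          rw [ha, one_div]
          exact mul_le_mul_of_nonneg_left hsub (Real.rpow_nonneg hk0.le _)
  -- star inequality
  have hstar : l1Norm h ≤ (2 * (k:ℝ)^a + β) * lqNorm q h + 2*σ := by
    have := l1Norm_split h S
    nlinarith [key1, holder]
  have hkk : (k:ℝ) ^ (1/q - 1) * (k:ℝ) ^ a = 1 := by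
    rw [← Real.rpow_add hk0, ha]
    norm_num
  have hsk : (qSparsity q x / (k:ℝ)) ^ a = β * (k:ℝ) ^ (1/q - 1) := by
    rw [Real.div_rpow hs0 hk0.le, hβeq, show (1/q - 1 : ℝ) = -a by rw [ha]; ring,
      Real.rpow_neg hk0.le, div_eq_mul_inv]
  have hk1q0 : 0 ≤ (k:ℝ) ^ (1/q - 1) := Real.rpow_nonneg hk0.le _
  have hka0 : 0 ≤ (k:ℝ) ^ a := Real.rpow_nonneg hk0.le _
  have hlq0 : 0 ≤ lqNorm q h := lqNorm_nonneg q h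
  by_cases hcase : lqNorm q h ≤ (k:ℝ) ^ (1/q - 1) * σ
  · constructor
    · have : 0 ≤ 2 * η / ρ := by positivity
      linarith
    · have hb1 : l1Norm h ≤ (2 * (k:ℝ)^a + β) * ((k:ℝ)^(1/q-1) * σ) + 2*σ := by
        have := mul_le_mul_of_nonneg_left hcase (by positivity : (0:ℝ) ≤ 2 * (k:ℝ)^a + β)
        linarith
      have he : (2 * (k:ℝ)^a + β) * ((k:ℝ)^(1/q-1) * σ) + 2*σ
          = (4 + (qSparsity q x / (k:ℝ)) ^ a) * σ := by
        rw [hsk]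
        linear_combination 2 * σ * hkk
      have h4 : 0 ≤ 4 * (k:ℝ)^a + 2 * (qSparsity q x)^a := by
        have := Real.rpow_nonneg hs0 a
        linarith [hka0]
      have hpos : 0 ≤ (4 * (k:ℝ)^a + 2 * (qSparsity q x)^a) * η / ρ :=
        div_nonneg (mul_nonneg h4 hη0) hρpos.le
      linarith [he ▸ hb1, hpos]
  · push_neg at hcase
    have hhq_pos : 0 < lqNorm q h := lt_of_le_of_lt (mul_nonneg hk1q0 hσ0) hcase
    have hlq_zero : lqNorm q (0 : Fin N → ℝ) = 0 := by
      have h1 : ∀ i : Fin N, |(0 : Fin N → ℝ) i| ^ q = 0 := fun i => by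
        simp [Real.zero_rpow (ne_of_gt hq0)]
      rw [lqNorm, Finset.sum_congr rfl (fun i _ => h1 i), Finset.sum_const_zero,
        Real.zero_rpow (by positivity : (1:ℝ)/q ≠ 0)]
    have hne : h ≠ 0 := by
      intro h0
      rw [h0, hlq_zero] at hhq_pos
      exact lt_irrefl 0 hhq_pos
    -- cone condition
    have hσh : σ ≤ (k:ℝ)^a * lqNorm q h := by
      have := mul_le_mul_of_nonneg_left hcase.le hka0
      calc σ = ((k:ℝ)^a * (k:ℝ)^(1/q-1)) * σ := by rw [mul_comm ((k:ℝ)^a), hkk, one_mul]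
        _ = (k:ℝ)^a * ((k:ℝ)^(1/q-1) * σ) := by ring
        _ ≤ (k:ℝ)^a * lqNorm q h := this
    have hratio : l1Norm h / lqNorm q h ≤ 4 * (k:ℝ)^a + β := by
      rw [div_le_iff₀ hhq_pos]
      nlinarith [hstar, hσh]
    have hcone : qSparsity q h ≤ C := by
      rw [qSparsity, hC, hβeq]
      exact Real.rpow_le_rpow (div_nonneg (l1Norm_nonneg h) hlq0) hratio (by positivity)
    have hAh : l2Norm (A.mulVec h) ≤ 2 * η := by
      have heq : A.mulVec h = (y - A.mulVec x) - (y - A.mulVec xh) := by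
        rw [hh, Matrix.mulVec_sub]; ring
      calc l2Norm (A.mulVec h) ≤ l2Norm (y - A.mulVec x) + l2Norm (y - A.mulVec xh) := by
            rw [heq]; exact l2Norm_sub_le _ _
        _ ≤ η + η := add_le_add hxfeas hfeas
        _ = 2 * η := by ring
    have hbound : lqNorm q h ≤ 2 * η / ρ := by
      have := hρ h hne hcone
      rw [le_div_iff₀ hhq_pos] at this
      rw [le_div_iff₀ hρpos]
      calc lqNorm q h * ρ = ρ * lqNorm q h := mul_comm _ _
        _ ≤ l2Norm (A.mulVec h) := this
        _ ≤ 2 * η := hAh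
    constructor
    · have : 0 ≤ (k:ℝ)^(1/q-1) * σ := mul_nonneg hk1q0 hσ0
      linarith
    · have hb1 : l1Norm h ≤ (2 * (k:ℝ)^a + β) * (2 * η / ρ) + 2*σ := by
        have := mul_le_mul_of_nonneg_left hbound (by positivity : (0:ℝ) ≤ 2 * (k:ℝ)^a + β)
        linarith
      have hsk0 : 0 ≤ (qSparsity q x / (k:ℝ)) ^ a :=
        Real.rpow_nonneg (div_nonneg hs0 hk0.le) _
      have h2σ : 2*σ ≤ (4 + (qSparsity q x / (k:ℝ)) ^ a) * σ := by nlinarith [hsk0, hσ0]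
      have hb1' : (2 * (k:ℝ)^a + β) * (2 * η / ρ) + 2*σ
          = (4 * (k:ℝ)^a + 2 * β) * η / ρ + 2*σ := by ring
      rw [hβeq]
      linarith [hb1.trans hb1'.le, h2σ]
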